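/- Let 𝔙 be a regular vessel. Then for every n ≥ 0, the moments of 𝔙 satisfy on Ω the evolution equation ∂_t H_n = i ∂_x H_{n+1} + i (∂_x H_0) σ1 H_n. -/

import Mathlib

noncomputable section

open ContinuousLinearMap

/-- The coefficient space `ℂ^d`. -/
abbrev Ed (d : ℕ) : Type := EuclideanSpace ℂ (Fin d)

/-- A `d × d` complex matrix viewed as a continuous linear map on `ℂ^d`. -/
def m2c {d : ℕ} (σ : Matrix (Fin d) (Fin d) ℂ) : Ed d →L[ℂ] Ed d :=
  Matrix.toEuclideanCLM (𝕜 := ℂ) σ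

/-- A continuous linear map on `ℂ^d` viewed as a `d × d` complex matrix. -/
def c2m {d : ℕ} (T : Ed d →L[ℂ] Ed d) : Matrix (Fin d) (Fin d) ℂ :=
  (Matrix.toEuclideanCLM (𝕜 := ℂ)).symm T

/-- Partial derivative in the first (space) variable. -/
def pdx {M : Type*} [NormedAddCommGroup M] [NormedSpace ℝ M]
    (F : ℝ × ℝ → M) (p : ℝ × ℝ) : M :=
  deriv (fun x => F (x, p.2)) p.1

/-- Partial derivative in the second (time) variable. -/
def pdt {M : Type*} [NormedAddCommGroup M] [NormedSpace ℝ M]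
    (F : ℝ × ℝ → M) (p : ℝ × ℝ) : M :=
  deriv (fun t => F (p.1, t)) p.2

/-- Entrywise partial derivative in `x` of a matrix-valued function. -/
def pdxM {d : ℕ} (F : ℝ × ℝ → Matrix (Fin d) (Fin d) ℂ) (p : ℝ × ℝ) :
    Matrix (Fin d) (Fin d) ℂ :=
  Matrix.of fun i j => pdx (fun q => F q i j) p

/-- Entrywise partial derivative in `t` of a matrix-valued function. -/
def pdtM {d : ℕ} (F : ℝ × ℝ → Matrix (Fin d) (Fin d) ℂ) (p : ℝ × ℝ) :
    Matrix (Fin d) (Fin d) ℂ :=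
  Matrix.of fun i j => pdt (fun q => F q i j) p

/-- A regular vessel with inner (Krein/Hilbert) space `K` and coefficient space `ℂ^d`. -/
structure Vessel (K : Type*) [NormedAddCommGroup K] [InnerProductSpace ℂ K]
    [CompleteSpace K] (d : ℕ) where
  Ω : Set (ℝ × ℝ)
  hΩ : IsOpen Ω
  A : K →L[ℂ] K
  Aζ : K →L[ℂ] K
  B : ℝ × ℝ → Ed d →L[ℂ] K
  C : ℝ × ℝ → K →L[ℂ] Ed d
  X : ℝ × ℝ → K →L[ℂ] K
  /-- pointwise inverse of `X` -/
  Xi : ℝ × ℝ → K →L[ℂ] K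
  σ1 : Matrix (Fin d) (Fin d) ℂ
  σ2 : Matrix (Fin d) (Fin d) ℂ
  γ : Matrix (Fin d) (Fin d) ℂ
  γs : ℝ × ℝ → Matrix (Fin d) (Fin d) ℂ
  hσ1 : IsUnit σ1
  smoothB : ContDiffOn ℝ 2 B Ω
  smoothC : ContDiffOn ℝ 2 C Ω
  smoothX : ContDiffOn ℝ 2 X Ω
  hXinv : ∀ p ∈ Ω, X p ∘L Xi p = (1 : K →L[ℂ] K) ∧ Xi p ∘L X p = (1 : K →L[ℂ] K)
  eqBx : ∀ p ∈ Ω,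
    pdx B p ∘L m2c σ1 + A ∘L B p ∘L m2c σ2 + B p ∘L m2c γ = 0
  eqBt : ∀ p ∈ Ω, pdt B p = Complex.I • (A ∘L pdx B p)
  eqCx : ∀ p ∈ Ω,
    m2c σ1 ∘L pdx C p + m2c σ2 ∘L C p ∘L Aζ - m2c γ ∘L C p = 0
  eqCt : ∀ p ∈ Ω, pdt C p = (-Complex.I) • (pdx C p ∘L Aζ)
  eqXx : ∀ p ∈ Ω, pdx X p = B p ∘L m2c σ2 ∘L C p
  eqXt : ∀ p ∈ Ω, pdt X p =
    Complex.I • (A ∘L B p ∘L m2c σ2 ∘L C p) -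
      Complex.I • (B p ∘L m2c σ2 ∘L C p ∘L Aζ) +
      Complex.I • (B p ∘L m2c γ ∘L C p)
  eqLyap : ∀ p ∈ Ω, A ∘L X p + X p ∘L Aζ + B p ∘L m2c σ1 ∘L C p = 0
  eqLink : ∀ p ∈ Ω, γs p =
    γ + σ2 * c2m (C p ∘L Xi p ∘L B p) * σ1 - σ1 * c2m (C p ∘L Xi p ∘L B p) * σ2

/-- The `n`-th moment `H_n = C 𝕏⁻¹ Aⁿ B` of a vessel, as a `d × d` matrix. -/
def Vessel.H {K : Type*} [NormedAddCommGroup K] [InnerProductSpace ℂ K]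
    [CompleteSpace K] {d : ℕ} (V : Vessel K d) (n : ℕ) (p : ℝ × ℝ) :
    Matrix (Fin d) (Fin d) ℂ :=
  c2m (V.C p ∘L V.Xi p ∘L (V.A ^ n) ∘L V.B p)

/-!
Differentiate `H_n = C 𝕏⁻¹ Aⁿ B` by the product rule, with `∂𝕏⁻¹ = -𝕏⁻¹ (∂𝕏) 𝕏⁻¹`, and insert
the vessel equations for `∂_t B`, `∂_t C`, `∂_t 𝕏`. The Lyapunov equation, in the form
`A_ζ 𝕏⁻¹ = -𝕏⁻¹ A - 𝕏⁻¹ B σ1 C 𝕏⁻¹`, removes `A_ζ`, and the `x`-equation for `B`, in the form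
`A B σ2 = -(∂_x B) σ1 - B γ`, trades `A B σ2` for `∂_x B`; the `γ`-terms then cancel and what is
left is `i ∂_x H_{n+1} + i (∂_x H_0) σ1 H_n`.
-/

theorem c2m_comp {d : ℕ} (S T : Ed d →L[ℂ] Ed d) : c2m (S ∘L T) = c2m S * c2m T := by
  simp [c2m, ← ContinuousLinearMap.mul_def, map_mul]

theorem c2m_smul {d : ℕ} (a : ℂ) (T : Ed d →L[ℂ] Ed d) : c2m (a • T) = a • c2m T := by
  simp [c2m]

theorem c2m_add {d : ℕ} (S T : Ed d →L[ℂ] Ed d) : c2m (S + T) = c2m S + c2m T := by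
  simp [c2m]

theorem c2m_m2c {d : ℕ} (σ : Matrix (Fin d) (Fin d) ℂ) : c2m (m2c σ) = σ := by
  simp [c2m, m2c]

theorem hasDerivAt_c2m_apply {d : ℕ} {f : ℝ → Ed d →L[ℂ] Ed d} {f' : Ed d →L[ℂ] Ed d} {t : ℝ}
    (h : HasDerivAt f f' t) (i j : Fin d) :
    HasDerivAt (fun s => c2m (f s) i j) (c2m f' i j) t := by
  let entry : (Ed d →L[ℂ] Ed d) →L[ℂ] ℂ :=
    LinearMap.toContinuousLinearMap ((Matrix.entryLinearMap ℂ ℂ i j).comp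
      (Matrix.toEuclideanCLM (n := Fin d) (𝕜 := ℂ)).symm.toAlgEquiv.toLinearMap)
  exact (entry.restrictScalars ℝ).hasFDerivAt.comp_hasDerivAt t h

theorem pdxM_c2m {d : ℕ} {F : ℝ × ℝ → Ed d →L[ℂ] Ed d} {p : ℝ × ℝ} {F' : Ed d →L[ℂ] Ed d}
    (h : HasDerivAt (fun x => F (x, p.2)) F' p.1) :
    pdxM (fun q => c2m (F q)) p = c2m F' := by
  ext i j
  exact (hasDerivAt_c2m_apply h i j).deriv

theorem pdtM_c2m {d : ℕ} {F : ℝ × ℝ → Ed d →L[ℂ] Ed d} {p : ℝ × ℝ} {F' : Ed d →L[ℂ] Ed d}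
    (h : HasDerivAt (fun t => F (p.1, t)) F' p.2) :
    pdtM (fun q => c2m (F q)) p = c2m F' := by
  ext i j
  exact (hasDerivAt_c2m_apply h i j).deriv

section PartialDerivatives

variable {E : Type*} [NormedAddCommGroup E] [NormedSpace ℝ E] {F : ℝ × ℝ → E} {p : ℝ × ℝ}

theorem DifferentiableAt.hasDerivAt_pdx (h : DifferentiableAt ℝ F p) :
    HasDerivAt (fun x => F (x, p.2)) (pdx F p) p.1 :=
  (h.comp p.1 (differentiableAt_id.prodMk (differentiableAt_const _))).hasDerivAt

theorem DifferentiableAt.hasDerivAt_pdt (h : DifferentiableAt ℝ F p) :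
    HasDerivAt (fun t => F (p.1, t)) (pdt F p) p.2 :=
  (h.comp p.2 ((differentiableAt_const _).prodMk differentiableAt_id)).hasDerivAt

end PartialDerivatives

theorem HasDerivAt.clm_comp_of_complex {E F G : Type*} [NormedAddCommGroup E] [NormedSpace ℂ E]
    [NormedAddCommGroup F] [NormedSpace ℂ F] [NormedAddCommGroup G] [NormedSpace ℂ G]
    {c : ℝ → F →L[ℂ] G} {c' : F →L[ℂ] G} {d : ℝ → E →L[ℂ] F} {d' : E →L[ℂ] F} {t : ℝ}
    (hc : HasDerivAt c c' t) (hd : HasDerivAt d d' t) :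
    HasDerivAt (fun s => (c s).comp (d s)) (c'.comp (d t) + (c t).comp d') t := by
  have hcomp := ((isBoundedBilinearMap_comp (𝕜 := ℂ) (E := E) (F := F)
      (G := G)).hasFDerivAt (c t, d t)).restrictScalars ℝ
  simpa [Function.comp_def, IsBoundedBilinearMap.deriv_apply, add_comm] using
    hcomp.comp_hasDerivAt t (hc.prodMk hd)

theorem HasDerivAt.ringInverse {R : Type*} [NormedRing R] [NormedAlgebra ℝ R]
    [HasSummableGeomSeries R] {f : ℝ → R} {f' : R} {t : ℝ} (u : Rˣ) (hu : f t = u)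
    (hf : HasDerivAt f f' t) :
    HasDerivAt (fun s => Ring.inverse (f s)) (-(↑u⁻¹ * f' * ↑u⁻¹)) t := by
  have hinv := hasFDerivAt_ringInverse (𝕜 := ℝ) u
  rw [← hu] at hinv
  simpa [Function.comp_def] using hinv.comp_hasDerivAt t hf

theorem mul_inv_eq_of_lyapunov {R : Type*} [Ring R] (u : Rˣ) {a b m : R}
    (h : a * u + u * b + m = 0) : b * ↑u⁻¹ = -(↑u⁻¹ * a) - ↑u⁻¹ * m * ↑u⁻¹ := by
  have hb : u * b = -(a * u) - m := by rw [← sub_eq_zero, ← h]; abel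
  calc b * ↑u⁻¹ = ↑u⁻¹ * (u * b) * ↑u⁻¹ := by simp [← mul_assoc]
    _ = -(↑u⁻¹ * a) - ↑u⁻¹ * m * ↑u⁻¹ := by simp [hb, mul_sub, sub_mul, mul_assoc]

section Moments

variable {K E : Type*} [NormedAddCommGroup K] [NormedSpace ℂ K] [NormedAddCommGroup E]
  [NormedSpace ℂ E]

/-- The derivative of `C 𝕏⁻¹ Aᵐ B`, with `Xi = 𝕏⁻¹`, when `B, 𝕏, C` move with velocities
`B', X', C'`. -/
def momentDeriv (A Xi : K →L[ℂ] K) (B : E →L[ℂ] K) (C : K →L[ℂ] E)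
    (B' : E →L[ℂ] K) (X' : K →L[ℂ] K) (C' : K →L[ℂ] E) (m : ℕ) : E →L[ℂ] E :=
  C' ∘L Xi ∘L (A ^ m) ∘L B - C ∘L Xi ∘L X' ∘L Xi ∘L (A ^ m) ∘L B + C ∘L Xi ∘L (A ^ m) ∘L B'

theorem hasDerivAt_moment [CompleteSpace K] {b : ℝ → E →L[ℂ] K} {x : ℝ → K →L[ℂ] K}
    {c : ℝ → K →L[ℂ] E} {b' : E →L[ℂ] K} {x' : K →L[ℂ] K} {c' : K →L[ℂ] E} {t : ℝ}
    (u : (K →L[ℂ] K)ˣ) (hu : x t = u) (hb : HasDerivAt b b' t) (hx : HasDerivAt x x' t)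
    (hc : HasDerivAt c c' t) (A : K →L[ℂ] K) (m : ℕ) :
    HasDerivAt (fun s => c s ∘L Ring.inverse (x s) ∘L (A ^ m) ∘L b s)
      (momentDeriv A ↑u⁻¹ (b t) (c t) b' x' c' m) t := by
  have hxi := hx.ringInverse u hu
  have hprod := hc.clm_comp_of_complex
    (hxi.clm_comp_of_complex ((hasDerivAt_const t (A ^ m)).clm_comp_of_complex hb))
  rw [hu, Ring.inverse_unit] at hprod
  convert hprod using 1
  simp only [momentDeriv, mul_def, zero_comp, zero_add, comp_add, neg_comp, comp_neg, comp_assoc]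
  abel

theorem momentDeriv_evolution (A Aζ : K →L[ℂ] K) (u : (K →L[ℂ] K)ˣ) (B Bx : E →L[ℂ] K)
    (C Cx : K →L[ℂ] E) (σ1 σ2 γ : E →L[ℂ] E)
    (hBx : Bx ∘L σ1 + A ∘L B ∘L σ2 + B ∘L γ = 0)
    (hLyap : A ∘L ↑u + ↑u ∘L Aζ + B ∘L σ1 ∘L C = 0) (n : ℕ) :
    momentDeriv A ↑u⁻¹ B C (Complex.I • (A ∘L Bx))
        (Complex.I • (A ∘L B ∘L σ2 ∘L C) - Complex.I • (B ∘L σ2 ∘L C ∘L Aζ) +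
          Complex.I • (B ∘L γ ∘L C))
        ((-Complex.I) • (Cx ∘L Aζ)) n =
      Complex.I • momentDeriv A ↑u⁻¹ B C Bx (B ∘L σ2 ∘L C) Cx (n + 1) +
        Complex.I • (momentDeriv A ↑u⁻¹ B C Bx (B ∘L σ2 ∘L C) Cx 0 ∘L σ1 ∘L
          C ∘L ↑u⁻¹ ∘L (A ^ n) ∘L B) := by
  have hAζ : ∀ w : E →L[ℂ] K, Aζ ∘L ↑u⁻¹ ∘L w =
      -(↑u⁻¹ ∘L A ∘L w) - ↑u⁻¹ ∘L B ∘L σ1 ∘L C ∘L ↑u⁻¹ ∘L w := fun w => by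
    have h := congrArg (· ∘L w) (mul_inv_eq_of_lyapunov u (a := A) (b := Aζ) hLyap)
    simpa only [mul_def, sub_comp, neg_comp, comp_assoc] using h
  have hAB : ∀ w : K →L[ℂ] E, A ∘L B ∘L σ2 ∘L w = -(Bx ∘L σ1 ∘L w) - B ∘L γ ∘L w := fun w => by
    have h := congrArg (· ∘L w) hBx
    simp only [add_comp, comp_assoc, zero_comp] at h
    linear_combination (norm := module) h
  have hpow : ∀ w : E →L[ℂ] K, (A ^ n) ∘L A ∘L w = (A ^ (n + 1)) ∘L w := fun w => by
    rw [← comp_assoc, ← mul_def, ← pow_succ]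
  have hpow' : ∀ w : E →L[ℂ] K, A ∘L (A ^ n) ∘L w = (A ^ (n + 1)) ∘L w := fun w => by
    rw [← comp_assoc, ← mul_def, ← pow_succ']
  simp only [momentDeriv, comp_add, add_comp, comp_sub, sub_comp, comp_neg, neg_comp, comp_smul,
    smul_comp, comp_assoc, pow_zero, one_def, id_comp, hAζ, hAB, hpow, hpow']
  module

end Moments

namespace Vessel

variable {K : Type*} [NormedAddCommGroup K] [InnerProductSpace ℂ K] [CompleteSpace K] {d : ℕ}
  (V : Vessel K d) {p : ℝ × ℝ}

def unitX (hp : p ∈ V.Ω) : (K →L[ℂ] K)ˣ :=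
  ⟨V.X p, V.Xi p, (V.hXinv p hp).1, (V.hXinv p hp).2⟩

theorem hasDerivAt_moment_comp {γ : ℝ → ℝ × ℝ} {t : ℝ} (hγ : ContinuousAt γ t) (hp : γ t = p)
    (hpΩ : p ∈ V.Ω) {B' : Ed d →L[ℂ] K} {X' : K →L[ℂ] K} {C' : K →L[ℂ] Ed d}
    (hB : HasDerivAt (fun s => V.B (γ s)) B' t) (hX : HasDerivAt (fun s => V.X (γ s)) X' t)
    (hC : HasDerivAt (fun s => V.C (γ s)) C' t) (m : ℕ) :
    HasDerivAt (fun s => V.C (γ s) ∘L V.Xi (γ s) ∘L (V.A ^ m) ∘L V.B (γ s))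
      (momentDeriv V.A (V.Xi p) (V.B p) (V.C p) B' X' C' m) t := by
  subst hp
  refine (hasDerivAt_moment (V.unitX hpΩ) rfl hB hX hC V.A m).congr_of_eventuallyEq ?_
  filter_upwards [hγ.eventually_mem (V.hΩ.mem_nhds hpΩ)] with s hs
  rw [show V.X (γ s) = V.unitX hs from rfl, Ring.inverse_unit]
  rfl

theorem hasDerivAt_moment_x (hp : p ∈ V.Ω) (m : ℕ) :
    HasDerivAt (fun x => V.C (x, p.2) ∘L V.Xi (x, p.2) ∘L (V.A ^ m) ∘L V.B (x, p.2))
      (momentDeriv V.A (V.Xi p) (V.B p) (V.C p) (pdx V.B p) (V.B p ∘L m2c V.σ2 ∘L V.C p)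
        (pdx V.C p) m) p.1 := by
  have hΩ := V.hΩ.mem_nhds hp
  have hX := ((V.smoothX.contDiffAt hΩ).differentiableAt two_ne_zero).hasDerivAt_pdx
  rw [V.eqXx p hp] at hX
  exact V.hasDerivAt_moment_comp (Continuous.prodMk_left p.2).continuousAt rfl hp
    ((V.smoothB.contDiffAt hΩ).differentiableAt two_ne_zero).hasDerivAt_pdx hX
    ((V.smoothC.contDiffAt hΩ).differentiableAt two_ne_zero).hasDerivAt_pdx m

theorem hasDerivAt_moment_t (hp : p ∈ V.Ω) (m : ℕ) :
    HasDerivAt (fun t => V.C (p.1, t) ∘L V.Xi (p.1, t) ∘L (V.A ^ m) ∘L V.B (p.1, t))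
      (momentDeriv V.A (V.Xi p) (V.B p) (V.C p) (Complex.I • (V.A ∘L pdx V.B p))
        (Complex.I • (V.A ∘L V.B p ∘L m2c V.σ2 ∘L V.C p) -
          Complex.I • (V.B p ∘L m2c V.σ2 ∘L V.C p ∘L V.Aζ) +
          Complex.I • (V.B p ∘L m2c V.γ ∘L V.C p))
        ((-Complex.I) • (pdx V.C p ∘L V.Aζ)) m) p.2 := by
  have hΩ := V.hΩ.mem_nhds hp
  have hB := ((V.smoothB.contDiffAt hΩ).differentiableAt two_ne_zero).hasDerivAt_pdt
  have hX := ((V.smoothX.contDiffAt hΩ).differentiableAt two_ne_zero).hasDerivAt_pdt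
  have hC := ((V.smoothC.contDiffAt hΩ).differentiableAt two_ne_zero).hasDerivAt_pdt
  rw [V.eqBt p hp] at hB
  rw [V.eqXt p hp] at hX
  rw [V.eqCt p hp] at hC
  exact V.hasDerivAt_moment_comp (Continuous.prodMk_right p.1).continuousAt rfl hp hB hX hC m

end Vessel

/-- the evolution equation of the moments. -/
theorem moment_evolution_t {K : Type*} [NormedAddCommGroup K]
    [InnerProductSpace ℂ K] [CompleteSpace K] {d : ℕ} (V : Vessel K d) :
    ∀ n : ℕ, ∀ p ∈ V.Ω,
      pdtM (V.H n) p =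
        Complex.I • pdxM (V.H (n + 1)) p +
          Complex.I • (pdxM (V.H 0) p * V.σ1 * V.H n p) := by
  intro n p hp
  have key := congrArg c2m <| momentDeriv_evolution V.A V.Aζ (V.unitX hp) (V.B p) (pdx V.B p)
    (V.C p) (pdx V.C p) (m2c V.σ1) (m2c V.σ2) (m2c V.γ) (V.eqBx p hp) (V.eqLyap p hp) n
  rw [c2m_add, c2m_smul, c2m_smul, c2m_comp, c2m_comp, c2m_m2c] at key
  unfold Vessel.H
  rw [pdtM_c2m (V.hasDerivAt_moment_t hp n), pdxM_c2m (V.hasDerivAt_moment_x hp (n + 1)),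
    pdxM_c2m (V.hasDerivAt_moment_x hp 0), mul_assoc]
  exact key
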